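/- arXiv:cs/0207084 — 2 statements merged into one kernel-verified Lean document; each statement's English description precedes it below -/
import Mathlib

section
/- The paraconsistent consequence operators are nonmonotonic: for distinct atoms A, B ∈ Σ and each i ∈ {p, s, c}, one has C_i({A, A→B}) = C_i^±({A, A→B}) = Cn({A, B}) (so in particular B is a consequence of {A, A→B}), while B ∉ C_i({A, ¬A, A→B}) and B ∉ C_i^±({A, ¬A, A→B}). Consequently, W ⊆ W' does not imply C_i(W) ⊆ C_i(W'), nor C_i^±(W) ⊆ C_i^±(W'). -/
namespace Para

/-- Propositional formulas over an alphabet `α`. -/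
inductive Fml (α : Type) : Type
  | atom : α → Fml α
  | top : Fml α
  | bot : Fml α
  | neg : Fml α → Fml α
  | conj : Fml α → Fml α → Fml α
  | disj : Fml α → Fml α → Fml α
  | impl : Fml α → Fml α → Fml α

namespace Fml

variable {α β : Type}

/-- Biconditional `a ≡ b`. -/
def iff' (a b : Fml α) : Fml α := conj (impl a b) (impl b a)

/-- Classical satisfaction: truth of a formula under an interpretation
(a set of atoms, those being true). -/
def holds (M : Set α) : Fml α → Prop
  | atom p => p ∈ M
  | top => True
  | bot => False
  | neg φ => ¬ holds M φ
  | conj φ ψ => holds M φ ∧ holds M ψ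
  | disj φ ψ => holds M φ ∨ holds M ψ
  | impl φ ψ => holds M φ → holds M ψ

/-- The set of atoms occurring in a formula. -/
def atoms : Fml α → Set α
  | atom p => {p}
  | top => ∅
  | bot => ∅
  | neg φ => atoms φ
  | conj φ ψ => atoms φ ∪ atoms ψ
  | disj φ ψ => atoms φ ∪ atoms ψ
  | impl φ ψ => atoms φ ∪ atoms ψ

/-- Renaming of atoms. -/
def map (f : α → β) : Fml α → Fml β
  | atom p => atom (f p)
  | top => top
  | bot => bot
  | neg φ => neg (map f φ)
  | conj φ ψ => conj (map f φ) (map f ψ)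
  | disj φ ψ => disj (map f φ) (map f ψ)
  | impl φ ψ => impl (map f φ) (map f ψ)

end Fml

/-- Classical consequence (= derivability, by soundness and completeness of
classical propositional logic). -/
def Entails {α : Type} (S : Set (Fml α)) (φ : Fml α) : Prop :=
  ∀ M : Set α, (∀ ψ ∈ S, ψ.holds M) → φ.holds M

/-- Deductive closure `Cn`. -/
def Cn {α : Type} (S : Set (Fml α)) : Set (Fml α) := {φ | Entails S φ}

/-- Consistency: `⊥ ∉ Cn S`. -/
def Consistent {α : Type} (S : Set (Fml α)) : Prop := Fml.bot ∉ Cn S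

/-- The atoms occurring in a set of formulas, `var(S)`. -/
def vars {α : Type} (S : Set (Fml α)) : Set α := ⋃ φ ∈ S, φ.atoms

/-- The alphabet `Σ ∪ Σ^±`: original atoms `p`, positive atoms `p⁺`,
negative atoms `p⁻`. -/
inductive XAtom (α : Type) : Type
  | orig : α → XAtom α
  | pos : α → XAtom α
  | neg : α → XAtom α

/-- Signed translation with a polarity flag (`true` = positive occurrence):
positive occurrences of `p` become `p⁺`, negative ones become `¬p⁻`. -/
def signedAux {α : Type} : Fml α → Bool → Fml (XAtom α)
  | .atom p, true => .atom (.pos p)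
  | .atom p, false => .neg (.atom (.neg p))
  | .top, _ => .top
  | .bot, _ => .bot
  | .neg φ, b => .neg (signedAux φ (!b))
  | .conj φ ψ, b => .conj (signedAux φ b) (signedAux ψ b)
  | .disj φ ψ, b => .disj (signedAux φ b) (signedAux ψ b)
  | .impl φ ψ, b => .impl (signedAux φ (!b)) (signedAux ψ b)

/-- The signed translation `α^±`. -/
def signed {α : Type} (φ : Fml α) : Fml (XAtom α) := signedAux φ true

/-- Embedding of `L_Σ` into `L_{Σ∪Σ^±}`. -/
def emb {α : Type} : Fml α → Fml (XAtom α) := Fml.map XAtom.orig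

/-- `W^± = {α^± | α ∈ W}`. -/
def signedSet {α : Type} (W : Set (Fml α)) : Set (Fml (XAtom α)) := signed '' W

/-- A default rule `(pre : jus / con)`. -/
structure Dflt (α : Type) where
  pre : Fml α
  jus : Fml α
  con : Fml α

/-- Atoms occurring in a default rule. -/
def Dflt.atoms {α : Type} (d : Dflt α) : Set α :=
  d.pre.atoms ∪ d.jus.atoms ∪ d.con.atoms

/-- The Reiter sequence `E_1 = V`, `E_{n+1} = Cn(E_n) ∪ {γ | (α:β/γ) ∈ D, α ∈ E_n, ¬β ∉ E}`
(0-indexed here). -/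
def extSeq {α : Type} (D : Set (Dflt α)) (V E : Set (Fml α)) : ℕ → Set (Fml α)
  | 0 => V
  | n+1 => Cn (extSeq D V E n) ∪
      {γ | ∃ d ∈ D, d.con = γ ∧ d.pre ∈ extSeq D V E n ∧ Fml.neg d.jus ∉ E}

/-- `E` is a (Reiter) extension of the default theory `(D, V)`. -/
def IsExtension {α : Type} (D : Set (Dflt α)) (V E : Set (Fml α)) : Prop :=
  E = ⋃ n, extSeq D V E n

/-- `E` is a hierarchic extension of `(⋃ n, Dn n, V)` with respect to the
partition `⟨Dn⟩`: `E = ⋃ En` where `E_0 = V` and `E_{n+1}` is an extension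
of `(Dn n, En n)`. -/
def IsHierExtension {α : Type} (Dn : ℕ → Set (Dflt α)) (V E : Set (Fml α)) : Prop :=
  ∃ En : ℕ → Set (Fml α), En 0 = V ∧ (∀ n, IsExtension (Dn n) (En n) (En (n+1))) ∧
    E = ⋃ n, En n

/-- The signed default `δ_p = ( : p⁺≡¬p⁻ / (p≡p⁺)∧(¬p≡p⁻) )`. -/
def deltap {α : Type} (p : α) : Dflt (XAtom α) where
  pre := .top
  jus := Fml.iff' (.atom (.pos p)) (.neg (.atom (.neg p)))
  con := .conj (Fml.iff' (.atom (.orig p)) (.atom (.pos p)))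
               (Fml.iff' (.neg (.atom (.orig p))) (.atom (.neg p)))

/-- `D_Σ = {δ_p | p ∈ Σ}`. -/
def DSigma (α : Type) : Set (Dflt (XAtom α)) := Set.range (deltap (α := α))

/-- `Π_S = {c(δ_p) | p ∈ Σ, ¬j(δ_p) ∉ S}`. -/
def PiSet {α : Type} (S : Set (Fml (XAtom α))) : Set (Fml (XAtom α)) :=
  {f | ∃ p : α, Fml.neg (deltap p).jus ∉ S ∧ f = (deltap p).con}

/-- The set of all extensions of `(D_Σ, W^±)`. -/
def Exts {α : Type} (W : Set (Fml α)) : Set (Set (Fml (XAtom α))) :=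
  {E | IsExtension (DSigma α) (signedSet W) E}

/-- Credulous unsigned consequence `W ⊢_c φ`. -/
def CredU {α : Type} (W : Set (Fml α)) (φ : Fml α) : Prop :=
  ∃ E ∈ Exts W, emb φ ∈ Cn (signedSet W ∪ PiSet E)

/-- Skeptical unsigned consequence `W ⊢_s φ`. -/
def SkepU {α : Type} (W : Set (Fml α)) (φ : Fml α) : Prop :=
  ∀ E ∈ Exts W, emb φ ∈ Cn (signedSet W ∪ PiSet E)

/-- Prudent unsigned consequence `W ⊢_p φ`. -/
def PrudU {α : Type} (W : Set (Fml α)) (φ : Fml α) : Prop :=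
  emb φ ∈ Cn (signedSet W ∪ ⋂ E ∈ Exts W, PiSet E)

/-- Credulous signed consequence `W ⊢_c^± φ`. -/
def CredS {α : Type} (W : Set (Fml α)) (φ : Fml α) : Prop :=
  ∃ E ∈ Exts W, signed φ ∈ Cn (signedSet W ∪ PiSet E)

/-- Skeptical signed consequence `W ⊢_s^± φ`. -/
def SkepS {α : Type} (W : Set (Fml α)) (φ : Fml α) : Prop :=
  ∀ E ∈ Exts W, signed φ ∈ Cn (signedSet W ∪ PiSet E)

/-- Prudent signed consequence `W ⊢_p^± φ`. -/
def PrudS {α : Type} (W : Set (Fml α)) (φ : Fml α) : Prop :=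
  signed φ ∈ Cn (signedSet W ∪ ⋂ E ∈ Exts W, PiSet E)

def Cc {α : Type} (W : Set (Fml α)) : Set (Fml α) := {φ | CredU W φ}
def Cs {α : Type} (W : Set (Fml α)) : Set (Fml α) := {φ | SkepU W φ}
def Cp {α : Type} (W : Set (Fml α)) : Set (Fml α) := {φ | PrudU W φ}
def CcPM {α : Type} (W : Set (Fml α)) : Set (Fml α) := {φ | CredS W φ}
def CsPM {α : Type} (W : Set (Fml α)) : Set (Fml α) := {φ | SkepS W φ}
def CpPM {α : Type} (W : Set (Fml α)) : Set (Fml α) := {φ | PrudS W φ}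

/-- `J'` is a maximal subset of `J` consistent with `V`. -/
def IsMaxConsSub {α : Type} (V J' J : Set (Fml α)) : Prop :=
  J' ⊆ J ∧ Consistent (V ∪ J') ∧
    ∀ J'', J' ⊆ J'' → J'' ⊆ J → Consistent (V ∪ J'') → J'' = J'

/-- Quantified Boolean formulas over an alphabet `α`. -/
inductive QBF (α : Type) : Type
  | atom : α → QBF α
  | top : QBF α
  | bot : QBF α
  | neg : QBF α → QBF α
  | conj : QBF α → QBF α → QBF α
  | disj : QBF α → QBF α → QBF α
  | impl : QBF α → QBF α → QBF α
  | all : α → QBF α → QBF α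
  | ex : α → QBF α → QBF α

/-- Truth of a QBF under an interpretation (a set of atoms):
`∀p Ψ` is true iff `Ψ` is true with `p` set to true and with `p` set to false,
dually for `∃p Ψ`. -/
def QBF.holds {α : Type} : Set α → QBF α → Prop
  | M, .atom p => p ∈ M
  | _, .top => True
  | _, .bot => False
  | M, .neg Φ => ¬ QBF.holds M Φ
  | M, .conj Φ Ψ => QBF.holds M Φ ∧ QBF.holds M Ψ
  | M, .disj Φ Ψ => QBF.holds M Φ ∨ QBF.holds M Ψ
  | M, .impl Φ Ψ => QBF.holds M Φ → QBF.holds M Ψ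
  | M, .all p Φ => QBF.holds (M ∪ {p}) Φ ∧ QBF.holds (M \ {p}) Φ
  | M, .ex p Φ => QBF.holds (M ∪ {p}) Φ ∨ QBF.holds (M \ {p}) Φ

/-- A QBF is valid iff it is true under every interpretation. -/
def QBF.Valid {α : Type} (Φ : QBF α) : Prop := ∀ M : Set α, Φ.holds M

/-- Propositional formulas are (quantifier-free) QBFs. -/
def Fml.toQBF {α : Type} : Fml α → QBF α
  | .atom p => .atom p
  | .top => .top
  | .bot => .bot
  | .neg φ => .neg φ.toQBF
  | .conj φ ψ => .conj φ.toQBF ψ.toQBF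
  | .disj φ ψ => .disj φ.toQBF ψ.toQBF
  | .impl φ ψ => .impl φ.toQBF ψ.toQBF

/-- Conjunction of a finite list of QBFs. -/
def QBF.conjList {α : Type} (l : List (QBF α)) : QBF α := l.foldr QBF.conj QBF.top

/-- `∃P Φ`: block of existential quantifiers over the atoms in `P`. -/
def QBF.exList {α : Type} (P : List α) (Φ : QBF α) : QBF α := P.foldr QBF.ex Φ

/-- `∀P Φ`: block of universal quantifiers over the atoms in `P`. -/
def QBF.allList {α : Type} (P : List α) (Φ : QBF α) : QBF α := P.foldr QBF.all Φ

/-- The module `C[T,S] = ∃P (T ∧ (G ≤ S))`, where `T` is given as the list `Ts`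
of its elements and the pairs `(g_i, φ_i)` encode `G ≤ S = ⋀ (g_i → φ_i)`. -/
def CMod {α : Type} (P : List α) (Ts : List (Fml α)) (pairs : List (α × Fml α)) : QBF α :=
  QBF.exList P (QBF.conj (QBF.conjList (Ts.map Fml.toQBF))
    (QBF.conjList (pairs.map (fun gp => QBF.impl (QBF.atom gp.1) gp.2.toQBF))))

/-- The module `Ext[T]` for a finite default theory `T = (D,V)` with
`D = {δ_1,…,δ_n}` and guessing atoms `g_1,…,g_n`:
`C[V, j(D)] ∧ ⋀_i (¬g_i → ¬ C[V ∪ {j(δ_i)}, j(D \ {δ_i})])`. -/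
def ExtMod {α : Type} {n : ℕ} (P : List α) (Vl : List (Fml α))
    (δ : Fin n → Dflt α) (g : Fin n → α) : QBF α :=
  QBF.conj
    (CMod P Vl ((List.finRange n).map fun i => (g i, (δ i).jus)))
    (QBF.conjList ((List.finRange n).map fun i =>
      QBF.impl (QBF.neg (QBF.atom (g i)))
        (QBF.neg (CMod P (Vl ++ [(δ i).jus])
          (((List.finRange n).filter (fun j => j != i)).map fun j => (g j, (δ j).jus))))))

/-- The module `Conseq[T,φ] = ∀P' (V ∧ (G ≤ c(D)) → φ)`. -/
def ConseqMod {α : Type} {n : ℕ} (P' : List α) (Vl : List (Fml α))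
    (δ : Fin n → Dflt α) (g : Fin n → α) (φ : Fml α) : QBF α :=
  QBF.allList P'
    (QBF.impl
      (QBF.conj (QBF.conjList (Vl.map Fml.toQBF))
        (QBF.conjList ((List.finRange n).map fun i =>
          QBF.impl (QBF.atom (g i)) (δ i).con.toQBF)))
      φ.toQBF)


/-! ### Auxiliary lemmas for nonmonotonicity -/

section Aux

variable {α : Type}

lemma subset_Cn' {S : Set (Fml α)} : S ⊆ Cn S := fun φ hφ M hM => hM φ hφ

lemma Cn_mono' {S T : Set (Fml α)} (h : S ⊆ T) : Cn S ⊆ Cn T :=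
  fun φ hφ M hM => hφ M (fun ψ hψ => hM ψ (h hψ))

lemma Cn_Cn' {S : Set (Fml α)} : Cn (Cn S) = Cn S := by
  apply Set.Subset.antisymm
  · intro φ hφ M hM
    exact hφ M (fun ψ hψ => hψ M hM)
  · exact subset_Cn'

lemma top_mem_Cn' {S : Set (Fml α)} : Fml.top ∈ Cn S := fun _ _ => trivial

lemma not_mem_Cn_of_model {S : Set (Fml α)} {φ : Fml α} (M : Set α)
    (hM : ∀ ψ ∈ S, ψ.holds M) (hφ : ¬ φ.holds M) : φ ∉ Cn S :=
  fun h => hφ (h M hM)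

lemma holds_map' {β : Type} (f : α → β) (M : Set β) (φ : Fml α) :
    (φ.map f).holds M ↔ φ.holds (f ⁻¹' M) := by
  induction φ <;> simp [Fml.map, Fml.holds, *] <;> rfl

/-- If a model satisfies all the consequents' equivalences, signed formulas
behave like the original ones on the `orig` part. -/
lemma holds_signedAux (M : Set (XAtom α))
    (h : ∀ p : α, (XAtom.pos p ∈ M ↔ XAtom.orig p ∈ M) ∧
        (XAtom.neg p ∈ M ↔ XAtom.orig p ∉ M))
    (φ : Fml α) : ∀ b, (signedAux φ b).holds M ↔ φ.holds (XAtom.orig ⁻¹' M) := by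
  induction φ with
  | atom p =>
      intro b; cases b <;>
        simp [signedAux, Fml.holds, (h p).1, (h p).2, Set.mem_preimage]
  | top => intro b; cases b <;> simp [signedAux, Fml.holds]
  | bot => intro b; cases b <;> simp [signedAux, Fml.holds]
  | neg φ ih => intro b; cases b <;> simp [signedAux, Fml.holds, ih]
  | conj φ ψ ih1 ih2 => intro b; cases b <;> simp [signedAux, Fml.holds, ih1, ih2]
  | disj φ ψ ih1 ih2 => intro b; cases b <;> simp [signedAux, Fml.holds, ih1, ih2]
  | impl φ ψ ih1 ih2 => intro b; cases b <;> simp [signedAux, Fml.holds, ih1, ih2]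

/-- The union of the Reiter sequence for `D_Σ`. -/
lemma iUnion_extSeq (V E : Set (Fml (XAtom α))) :
    (⋃ n, extSeq (DSigma α) V E n) = Cn (V ∪ PiSet E) := by
  have hsub : ∀ n, extSeq (DSigma α) V E n ⊆ Cn (V ∪ PiSet E) := by
    intro n
    induction n with
    | zero => exact (Set.subset_union_left).trans subset_Cn'
    | succ n ih =>
        intro γ hγ
        rcases hγ with hγ | hγ
        · exact Cn_Cn' ▸ (Cn_mono' ih) hγ
        · rcases hγ with ⟨d, hd, hcon, _, hjus⟩
          rcases hd with ⟨p, rfl⟩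
          exact subset_Cn' (Set.mem_union_right _ ⟨p, hjus, hcon.symm⟩)
  apply Set.Subset.antisymm
  · exact Set.iUnion_subset hsub
  · -- Cn (V ∪ PiSet E) ⊆ extSeq 3
    have h1 : Cn V ⊆ extSeq (DSigma α) V E 1 := Set.subset_union_left
    have h2 : extSeq (DSigma α) V E 1 ⊆ extSeq (DSigma α) V E 2 :=
      subset_Cn'.trans Set.subset_union_left
    have hV2 : V ⊆ extSeq (DSigma α) V E 2 := subset_Cn'.trans (h1.trans h2)
    have hPi2 : PiSet E ⊆ extSeq (DSigma α) V E 2 := by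
      rintro f ⟨p, hj, rfl⟩
      exact Set.mem_union_right _
        ⟨deltap p, ⟨p, rfl⟩, rfl, h1 top_mem_Cn', hj⟩
    have h3 : Cn (V ∪ PiSet E) ⊆ extSeq (DSigma α) V E 3 :=
      (Cn_mono' (Set.union_subset hV2 hPi2)).trans Set.subset_union_left
    exact h3.trans (Set.subset_iUnion _ 3)

lemma isExtension_iff (V E : Set (Fml (XAtom α))) :
    IsExtension (DSigma α) V E ↔ E = Cn (V ∪ PiSet E) := by
  rw [IsExtension, iUnion_extSeq]

/-- Characterization of the (unique) extension, given a suitable model `M`. -/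
lemma ext_char (V : Set (Fml (XAtom α))) (Good : α → Prop) (M : Set (XAtom α))
    (hMV : ∀ ψ ∈ V, ψ.holds M)
    (hMc : ∀ p, Good p → ((deltap p).con).holds M)
    (hMj : ∀ p, Good p → ((deltap p).jus).holds M)
    (hbad : ∀ p, ¬ Good p → Entails V (Fml.neg (deltap p).jus)) :
    PiSet (Cn (V ∪ {f | ∃ p, Good p ∧ f = (deltap p).con})) =
      {f | ∃ p, Good p ∧ f = (deltap p).con} ∧
    ∀ E, (IsExtension (DSigma α) V E ↔
      E = Cn (V ∪ {f | ∃ p, Good p ∧ f = (deltap p).con})) := by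
  set GC : Set (Fml (XAtom α)) := {f | ∃ p, Good p ∧ f = (deltap p).con} with hGC
  have hMGC : ∀ f ∈ GC, f.holds M := by
    rintro f ⟨p, hp, rfl⟩; exact hMc p hp
  -- for any E containing Cn V, PiSet E ⊆ GC
  have hPi : ∀ E : Set (Fml (XAtom α)), Cn V ⊆ E → PiSet E ⊆ GC := by
    rintro E hE f ⟨p, hj, rfl⟩
    refine ⟨p, ?_, rfl⟩
    by_contra hg
    exact hj (hE (hbad p hg))
  have hnot : ∀ S ⊆ GC, ∀ p, Good p → Fml.neg (deltap p).jus ∉ Cn (V ∪ S) := by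
    intro S hS p hp
    apply not_mem_Cn_of_model M
    · intro ψ hψ
      rcases hψ with hψ | hψ
      · exact hMV ψ hψ
      · exact hMGC ψ (hS hψ)
    · exact fun h => h (hMj p hp)
  have hfix : PiSet (Cn (V ∪ GC)) = GC := by
    apply Set.Subset.antisymm
    · exact hPi _ (Cn_mono' Set.subset_union_left)
    · rintro f ⟨p, hp, rfl⟩
      exact ⟨p, hnot GC (fun _ h => h) p hp, rfl⟩
  refine ⟨hfix, fun E => ?_⟩
  rw [isExtension_iff]
  constructor
  · intro hE
    have hCnV : Cn V ⊆ E := hE ▸ Cn_mono' Set.subset_union_left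
    have hsub : PiSet E ⊆ GC := hPi E hCnV
    have : PiSet E = GC := by
      apply Set.Subset.antisymm hsub
      rintro f ⟨p, hp, rfl⟩
      refine ⟨p, ?_, rfl⟩
      rw [hE]
      exact hnot _ hsub p hp
    rw [hE, this]
  · intro hE
    rw [hE, hfix]

/-- The lifted model of a classical model: `orig`/`pos` true on `M₀`,
`neg` true off `M₀`. -/
def liftM (M₀ : Set α) : Set (XAtom α) := fun x =>
  match x with
  | .orig p => p ∈ M₀
  | .pos p => p ∈ M₀
  | .neg p => p ∉ M₀

lemma liftM_eqv (M₀ : Set α) :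
    ∀ p : α, (XAtom.pos p ∈ liftM M₀ ↔ XAtom.orig p ∈ liftM M₀) ∧
      (XAtom.neg p ∈ liftM M₀ ↔ XAtom.orig p ∉ liftM M₀) :=
  fun _ => ⟨Iff.rfl, Iff.rfl⟩

lemma liftM_preimage (M₀ : Set α) : XAtom.orig ⁻¹' liftM M₀ = M₀ := rfl

lemma holds_con_of_eqv (M : Set (XAtom α))
    (h : ∀ p : α, (XAtom.pos p ∈ M ↔ XAtom.orig p ∈ M) ∧
        (XAtom.neg p ∈ M ↔ XAtom.orig p ∉ M)) (p : α) :
    ((deltap p).con).holds M := by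
  have h1 := (h p).1
  have h2 := (h p).2
  simp only [deltap, Fml.iff', Fml.holds]
  constructor
  · exact ⟨h1.2, fun hp => h1.1 hp⟩
  · exact ⟨fun hp => h2.2 hp, fun hp => h2.1 hp⟩

end Aux


section Aux2

variable {α : Type}

lemma holds_signed_lift (M₀ : Set α) (φ : Fml α) :
    (signed φ).holds (liftM M₀) ↔ φ.holds M₀ := by
  have h := holds_signedAux (liftM M₀) (liftM_eqv M₀) φ true
  rwa [liftM_preimage] at h

lemma holds_emb (M : Set (XAtom α)) (φ : Fml α) :
    (emb φ).holds M ↔ φ.holds (XAtom.orig ⁻¹' M) := holds_map' _ _ _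

lemma holds_jus_lift (M₀ : Set α) (p : α) : ((deltap p).jus).holds (liftM M₀) := by
  refine ⟨fun h h2 => h2 h, fun h => of_not_not h⟩

lemma eqv_of_allcons {M : Set (XAtom α)}
    (h : ∀ f ∈ ({f | ∃ p : α, True ∧ f = (deltap p).con} : Set (Fml (XAtom α))), f.holds M) :
    ∀ p : α, (XAtom.pos p ∈ M ↔ XAtom.orig p ∈ M) ∧
      (XAtom.neg p ∈ M ↔ XAtom.orig p ∉ M) := by
  intro p
  obtain ⟨⟨h1, h2⟩, h3, h4⟩ := h _ ⟨p, trivial, rfl⟩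
  exact ⟨⟨h2, h1⟩, ⟨h4, h3⟩⟩

/-- Key semantic lemma for `W = {A, A→B}`. -/
lemma key1 (A B : α) (φ : Fml α) :
    (emb φ ∈ Cn (signedSet ({Fml.atom A, Fml.impl (Fml.atom A) (Fml.atom B)} : Set (Fml α))
        ∪ {f | ∃ p : α, True ∧ f = (deltap p).con}) ↔ φ ∈ Cn {Fml.atom A, Fml.atom B}) ∧
    (signed φ ∈ Cn (signedSet ({Fml.atom A, Fml.impl (Fml.atom A) (Fml.atom B)} : Set (Fml α))
        ∪ {f | ∃ p : α, True ∧ f = (deltap p).con}) ↔ φ ∈ Cn {Fml.atom A, Fml.atom B}) := by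
  have hmodel : ∀ M₀ : Set α, (∀ ψ ∈ ({Fml.atom A, Fml.atom B} : Set (Fml α)), ψ.holds M₀) →
      ∀ ψ ∈ (signedSet ({Fml.atom A, Fml.impl (Fml.atom A) (Fml.atom B)} : Set (Fml α))
        ∪ {f | ∃ p : α, True ∧ f = (deltap p).con}), ψ.holds (liftM M₀) := by
    intro M₀ hM₀ ψ hψ
    have hA : A ∈ M₀ := hM₀ (Fml.atom A) (Or.inl rfl)
    have hB : B ∈ M₀ := hM₀ (Fml.atom B) (Or.inr rfl)
    rcases hψ with ⟨χ, hχ, rfl⟩ | ⟨p, _, rfl⟩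
    · rw [holds_signed_lift]
      rcases hχ with rfl | rfl
      · exact hA
      · exact fun _ => hB
    · exact holds_con_of_eqv _ (liftM_eqv M₀) p
  have hback : ∀ N : Set (XAtom α),
      (∀ ψ ∈ (signedSet ({Fml.atom A, Fml.impl (Fml.atom A) (Fml.atom B)} : Set (Fml α))
        ∪ {f | ∃ p : α, True ∧ f = (deltap p).con}), ψ.holds N) →
      (∀ p : α, (XAtom.pos p ∈ N ↔ XAtom.orig p ∈ N) ∧
        (XAtom.neg p ∈ N ↔ XAtom.orig p ∉ N)) ∧
      ∀ ψ ∈ ({Fml.atom A, Fml.atom B} : Set (Fml α)), ψ.holds (XAtom.orig ⁻¹' N) := by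
    intro N hN
    have eqv := eqv_of_allcons (fun f hf => hN f (Set.mem_union_right _ hf))
    have hpA : XAtom.pos A ∈ N :=
      hN (signed (Fml.atom A)) (Set.mem_union_left _ ⟨_, Or.inl rfl, rfl⟩)
    have hoA : XAtom.orig A ∈ N := (eqv A).1.mp hpA
    have hnA : XAtom.neg A ∉ N := fun hn => (eqv A).2.mp hn hoA
    have himp : ¬ (XAtom.neg A ∈ N) → XAtom.pos B ∈ N :=
      hN (signed (Fml.impl (Fml.atom A) (Fml.atom B)))
        (Set.mem_union_left _ ⟨_, Or.inr rfl, rfl⟩)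
    have hoB : XAtom.orig B ∈ N := (eqv B).1.mp (himp hnA)
    refine ⟨eqv, ?_⟩
    rintro ψ (rfl | rfl)
    · exact hoA
    · exact hoB
  constructor
  · constructor
    · intro h M₀ hM₀
      exact (holds_emb _ φ).mp (h (liftM M₀) (hmodel M₀ hM₀))
    · intro h N hN
      exact (holds_emb N φ).mpr (h _ (hback N hN).2)
  · constructor
    · intro h M₀ hM₀
      exact (holds_signed_lift M₀ φ).mp (h (liftM M₀) (hmodel M₀ hM₀))
    · intro h N hN
      exact (holds_signedAux N (hback N hN).1 φ true).mpr (h _ (hback N hN).2)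

/-- The countermodel for `W = {A, ¬A, A→B}`. -/
def M2model (A : α) : Set (XAtom α) := fun x =>
  match x with
  | .orig _ => False
  | .pos p => p = A
  | .neg _ => True

lemma M2_sW2 (A B : α) : ∀ ψ ∈ signedSet
    ({Fml.atom A, Fml.neg (Fml.atom A), Fml.impl (Fml.atom A) (Fml.atom B)} : Set (Fml α)),
    ψ.holds (M2model A) := by
  rintro ψ ⟨χ, hχ, rfl⟩
  rcases hχ with rfl | rfl | rfl
  · exact rfl
  · exact fun h => h trivial
  · exact fun h => absurd trivial h

lemma M2_cons (A : α) : ∀ p : α, p ≠ A → ((deltap p).con).holds (M2model A) :=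
  fun _ hp => ⟨⟨fun h => False.elim h, fun h => absurd h hp⟩, ⟨fun _ => trivial, fun _ h => h⟩⟩

lemma M2_jus (A : α) : ∀ p : α, p ≠ A → ((deltap p).jus).holds (M2model A) :=
  fun _ hp => ⟨fun h => absurd h hp, fun h => absurd trivial h⟩

lemma M2_bad (A B : α) : Entails (signedSet
    ({Fml.atom A, Fml.neg (Fml.atom A), Fml.impl (Fml.atom A) (Fml.atom B)} : Set (Fml α)))
    (Fml.neg (deltap A).jus) := by
  intro N hN
  have h1 : XAtom.pos A ∈ N := hN (signed (Fml.atom A)) ⟨_, Or.inl rfl, rfl⟩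
  have h2 : XAtom.neg A ∈ N :=
    not_not.mp (hN (signed (Fml.neg (Fml.atom A))) ⟨_, Or.inr (Or.inl rfl), rfl⟩)
  exact fun hj => hj.1 h1 h2

/-- Key semantic lemma for `W = {A, ¬A, A→B}`: `B` is not derivable. -/
lemma key2 (A B : α) (hAB : A ≠ B) :
    Fml.atom (XAtom.orig B) ∉ Cn (signedSet
      ({Fml.atom A, Fml.neg (Fml.atom A), Fml.impl (Fml.atom A) (Fml.atom B)} : Set (Fml α))
      ∪ {f | ∃ p : α, p ≠ A ∧ f = (deltap p).con}) ∧
    Fml.atom (XAtom.pos B) ∉ Cn (signedSet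
      ({Fml.atom A, Fml.neg (Fml.atom A), Fml.impl (Fml.atom A) (Fml.atom B)} : Set (Fml α))
      ∪ {f | ∃ p : α, p ≠ A ∧ f = (deltap p).con}) := by
  have hmod : ∀ ψ ∈ (signedSet
      ({Fml.atom A, Fml.neg (Fml.atom A), Fml.impl (Fml.atom A) (Fml.atom B)} : Set (Fml α))
      ∪ {f | ∃ p : α, p ≠ A ∧ f = (deltap p).con}), ψ.holds (M2model A) := by
    rintro ψ (hψ | ⟨p, hp, rfl⟩)
    · exact M2_sW2 A B ψ hψ
    · exact M2_cons A p hp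
  exact ⟨not_mem_Cn_of_model _ hmod (fun h => h),
    not_mem_Cn_of_model _ hmod (fun h => hAB h.symm)⟩

end Aux2

/-- Nonmonotonicity. For distinct atoms `A, B` and each
`i ∈ {p,s,c}`: `C_i({A, A→B}) = C_i^±({A, A→B}) = Cn({A, B})`, while
`B ∉ C_i({A, ¬A, A→B})` and `B ∉ C_i^±({A, ¬A, A→B})`; consequently
`W ⊆ W'` implies neither `C_i(W) ⊆ C_i(W')` nor `C_i^±(W) ⊆ C_i^±(W')`. -/
theorem nonmonotonicity {α : Type} (A B : α) (hAB : A ≠ B) :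
    (Cp {Fml.atom A, Fml.impl (Fml.atom A) (Fml.atom B)} = Cn {Fml.atom A, Fml.atom B} ∧
     Cs {Fml.atom A, Fml.impl (Fml.atom A) (Fml.atom B)} = Cn {Fml.atom A, Fml.atom B} ∧
     Cc {Fml.atom A, Fml.impl (Fml.atom A) (Fml.atom B)} = Cn {Fml.atom A, Fml.atom B} ∧
     CpPM {Fml.atom A, Fml.impl (Fml.atom A) (Fml.atom B)} = Cn {Fml.atom A, Fml.atom B} ∧
     CsPM {Fml.atom A, Fml.impl (Fml.atom A) (Fml.atom B)} = Cn {Fml.atom A, Fml.atom B} ∧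
     CcPM {Fml.atom A, Fml.impl (Fml.atom A) (Fml.atom B)} = Cn {Fml.atom A, Fml.atom B}) ∧
    (Fml.atom B ∉ Cp {Fml.atom A, Fml.neg (Fml.atom A), Fml.impl (Fml.atom A) (Fml.atom B)} ∧
     Fml.atom B ∉ Cs {Fml.atom A, Fml.neg (Fml.atom A), Fml.impl (Fml.atom A) (Fml.atom B)} ∧
     Fml.atom B ∉ Cc {Fml.atom A, Fml.neg (Fml.atom A), Fml.impl (Fml.atom A) (Fml.atom B)} ∧
     Fml.atom B ∉ CpPM {Fml.atom A, Fml.neg (Fml.atom A), Fml.impl (Fml.atom A) (Fml.atom B)} ∧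
     Fml.atom B ∉ CsPM {Fml.atom A, Fml.neg (Fml.atom A), Fml.impl (Fml.atom A) (Fml.atom B)} ∧
     Fml.atom B ∉ CcPM {Fml.atom A, Fml.neg (Fml.atom A), Fml.impl (Fml.atom A) (Fml.atom B)}) ∧
    (∃ W W' : Set (Fml α), W ⊆ W' ∧
      ¬ (Cp W ⊆ Cp W') ∧ ¬ (Cs W ⊆ Cs W') ∧ ¬ (Cc W ⊆ Cc W') ∧
      ¬ (CpPM W ⊆ CpPM W') ∧ ¬ (CsPM W ⊆ CsPM W') ∧ ¬ (CcPM W ⊆ CcPM W')) := by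
  classical
  set W1 : Set (Fml α) := {Fml.atom A, Fml.impl (Fml.atom A) (Fml.atom B)} with hW1def
  set W2 : Set (Fml α) :=
    {Fml.atom A, Fml.neg (Fml.atom A), Fml.impl (Fml.atom A) (Fml.atom B)} with hW2def
  -- Case 1: the theory {A, A→B}
  have hMV1 : ∀ ψ ∈ signedSet W1, ψ.holds (liftM ({A, B} : Set α)) := by
    rintro ψ ⟨χ, hχ, rfl⟩
    rw [holds_signed_lift]
    rcases hχ with rfl | rfl
    · exact Or.inl rfl
    · exact fun _ => Or.inr rfl
  obtain ⟨hfix1₀, hchar1₀⟩ := ext_char (signedSet W1) (fun _ => True)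
    (liftM ({A, B} : Set α)) hMV1
    (fun p _ => holds_con_of_eqv _ (liftM_eqv _) p)
    (fun p _ => holds_jus_lift _ p)
    (fun _ hp => absurd trivial hp)
  set GC1 : Set (Fml (XAtom α)) := {f | ∃ p : α, True ∧ f = (deltap p).con} with hGC1def
  set E1 : Set (Fml (XAtom α)) := Cn (signedSet W1 ∪ GC1) with hE1def
  have hfix1 : PiSet E1 = GC1 := hfix1₀
  have hchar1 : ∀ E, IsExtension (DSigma α) (signedSet W1) E ↔ E = E1 := hchar1₀
  have hExts1 : Exts W1 = {E1} :=
    Set.ext fun E => (hchar1 E).trans Set.mem_singleton_iff.symm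
  have hInter1 : (⋂ E ∈ Exts W1, PiSet E) = GC1 := by
    rw [hExts1, Set.biInter_singleton]; exact hfix1
  -- Case 2: the theory {A, ¬A, A→B}
  obtain ⟨hfix2₀, hchar2₀⟩ := ext_char (signedSet W2) (fun p => p ≠ A)
    (M2model A) (M2_sW2 A B) (M2_cons A) (M2_jus A)
    (fun p hp => by rw [not_not.mp hp]; exact M2_bad A B)
  set GC2 : Set (Fml (XAtom α)) := {f | ∃ p : α, p ≠ A ∧ f = (deltap p).con} with hGC2def
  set E2 : Set (Fml (XAtom α)) := Cn (signedSet W2 ∪ GC2) with hE2def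
  have hfix2 : PiSet E2 = GC2 := hfix2₀
  have hchar2 : ∀ E, IsExtension (DSigma α) (signedSet W2) E ↔ E = E2 := hchar2₀
  have hExts2 : Exts W2 = {E2} :=
    Set.ext fun E => (hchar2 E).trans Set.mem_singleton_iff.symm
  have hInter2 : (⋂ E ∈ Exts W2, PiSet E) = GC2 := by
    rw [hExts2, Set.biInter_singleton]; exact hfix2
  -- the six equalities for W1
  have hCp1 : Cp W1 = Cn {Fml.atom A, Fml.atom B} := by
    ext φ
    show emb φ ∈ Cn (signedSet W1 ∪ ⋂ E ∈ Exts W1, PiSet E) ↔ _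
    rw [hInter1]
    exact (key1 A B φ).1
  have hCs1 : Cs W1 = Cn {Fml.atom A, Fml.atom B} := by
    ext φ
    show (∀ E ∈ Exts W1, emb φ ∈ Cn (signedSet W1 ∪ PiSet E)) ↔ _
    constructor
    · intro h
      have h' := h E1 ((hchar1 E1).mpr rfl)
      rw [hfix1] at h'
      exact (key1 A B φ).1.mp h'
    · intro h E hE
      rw [(hchar1 E).mp hE, hfix1]
      exact (key1 A B φ).1.mpr h
  have hCc1 : Cc W1 = Cn {Fml.atom A, Fml.atom B} := by
    ext φ
    show (∃ E ∈ Exts W1, emb φ ∈ Cn (signedSet W1 ∪ PiSet E)) ↔ _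
    constructor
    · rintro ⟨E, hE, hm⟩
      rw [(hchar1 E).mp hE, hfix1] at hm
      exact (key1 A B φ).1.mp hm
    · intro h
      refine ⟨E1, (hchar1 E1).mpr rfl, ?_⟩
      rw [hfix1]
      exact (key1 A B φ).1.mpr h
  have hCpPM1 : CpPM W1 = Cn {Fml.atom A, Fml.atom B} := by
    ext φ
    show signed φ ∈ Cn (signedSet W1 ∪ ⋂ E ∈ Exts W1, PiSet E) ↔ _
    rw [hInter1]
    exact (key1 A B φ).2
  have hCsPM1 : CsPM W1 = Cn {Fml.atom A, Fml.atom B} := by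
    ext φ
    show (∀ E ∈ Exts W1, signed φ ∈ Cn (signedSet W1 ∪ PiSet E)) ↔ _
    constructor
    · intro h
      have h' := h E1 ((hchar1 E1).mpr rfl)
      rw [hfix1] at h'
      exact (key1 A B φ).2.mp h'
    · intro h E hE
      rw [(hchar1 E).mp hE, hfix1]
      exact (key1 A B φ).2.mpr h
  have hCcPM1 : CcPM W1 = Cn {Fml.atom A, Fml.atom B} := by
    ext φ
    show (∃ E ∈ Exts W1, signed φ ∈ Cn (signedSet W1 ∪ PiSet E)) ↔ _
    constructor
    · rintro ⟨E, hE, hm⟩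
      rw [(hchar1 E).mp hE, hfix1] at hm
      exact (key1 A B φ).2.mp hm
    · intro h
      refine ⟨E1, (hchar1 E1).mpr rfl, ?_⟩
      rw [hfix1]
      exact (key1 A B φ).2.mpr h
  -- the six non-memberships for W2
  have hnCp2 : Fml.atom B ∉ Cp W2 := by
    intro h
    have h' : emb (Fml.atom B) ∈ Cn (signedSet W2 ∪ ⋂ E ∈ Exts W2, PiSet E) := h
    rw [hInter2] at h'
    exact (key2 A B hAB).1 h'
  have hnCs2 : Fml.atom B ∉ Cs W2 := by
    intro h
    have h' := h E2 ((hchar2 E2).mpr rfl)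
    rw [hfix2] at h'
    exact (key2 A B hAB).1 h'
  have hnCc2 : Fml.atom B ∉ Cc W2 := by
    rintro ⟨E, hE, hm⟩
    rw [(hchar2 E).mp hE, hfix2] at hm
    exact (key2 A B hAB).1 hm
  have hnCpPM2 : Fml.atom B ∉ CpPM W2 := by
    intro h
    have h' : signed (Fml.atom B) ∈ Cn (signedSet W2 ∪ ⋂ E ∈ Exts W2, PiSet E) := h
    rw [hInter2] at h'
    exact (key2 A B hAB).2 h'
  have hnCsPM2 : Fml.atom B ∉ CsPM W2 := by
    intro h
    have h' := h E2 ((hchar2 E2).mpr rfl)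
    rw [hfix2] at h'
    exact (key2 A B hAB).2 h'
  have hnCcPM2 : Fml.atom B ∉ CcPM W2 := by
    rintro ⟨E, hE, hm⟩
    rw [(hchar2 E).mp hE, hfix2] at hm
    exact (key2 A B hAB).2 hm
  refine ⟨⟨hCp1, hCs1, hCc1, hCpPM1, hCsPM1, hCcPM1⟩,
    ⟨hnCp2, hnCs2, hnCc2, hnCpPM2, hnCsPM2, hnCcPM2⟩, W1, W2, ?_, ?_, ?_, ?_, ?_, ?_, ?_⟩
  · rintro x (rfl | rfl)
    · exact Or.inl rfl
    · exact Or.inr (Or.inr rfl)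
  · intro h
    exact hnCp2 (h ((Set.ext_iff.mp hCp1 (Fml.atom B)).mpr (fun M hM => hM _ (Or.inr rfl))))
  · intro h
    exact hnCs2 (h ((Set.ext_iff.mp hCs1 (Fml.atom B)).mpr (fun M hM => hM _ (Or.inr rfl))))
  · intro h
    exact hnCc2 (h ((Set.ext_iff.mp hCc1 (Fml.atom B)).mpr (fun M hM => hM _ (Or.inr rfl))))
  · intro h
    exact hnCpPM2 (h ((Set.ext_iff.mp hCpPM1 (Fml.atom B)).mpr (fun M hM => hM _ (Or.inr rfl))))
  · intro h
    exact hnCsPM2 (h ((Set.ext_iff.mp hCsPM1 (Fml.atom B)).mpr (fun M hM => hM _ (Or.inr rfl))))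
  · intro h
    exact hnCcPM2 (h ((Set.ext_iff.mp hCcPM1 (Fml.atom B)).mpr (fun M hM => hM _ (Or.inr rfl))))


end Para
end

section
/- Let W ⊆ L_Σ be a finite set of propositional formulas, C ⊆ D_Σ a set of signed defaults, and C_W = {δ_p ∈ C | p ∈ var(W)}. Then the unsigned consequences of the corresponding theories coincide: Cn(W^± ∪ c(C_W)) ∩ L_Σ = Cn(W^± ∪ c(C)) ∩ L_Σ. -/
namespace Para

lemma holds_congr {α : Type} (φ : Fml α) {M M' : Set α}
    (h : ∀ a ∈ φ.atoms, (a ∈ M ↔ a ∈ M')) : φ.holds M ↔ φ.holds M' := by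
  induction φ with
  | atom p => exact h p rfl
  | top => rfl
  | bot => rfl
  | neg φ ih => exact not_congr (ih h)
  | conj φ ψ ihφ ihψ =>
      exact and_congr (ihφ fun a ha => h a (Or.inl ha)) (ihψ fun a ha => h a (Or.inr ha))
  | disj φ ψ ihφ ihψ =>
      exact or_congr (ihφ fun a ha => h a (Or.inl ha)) (ihψ fun a ha => h a (Or.inr ha))
  | impl φ ψ ihφ ihψ =>
      exact imp_congr (ihφ fun a ha => h a (Or.inl ha)) (ihψ fun a ha => h a (Or.inr ha))

lemma atoms_signedAux {α : Type} (φ : Fml α) :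
    ∀ b, (signedAux φ b).atoms ⊆ {a | ∃ q ∈ φ.atoms, a = .pos q ∨ a = .neg q} := by
  induction φ with
  | atom p =>
      rintro b a ha
      cases b <;> simp [signedAux, Fml.atoms] at ha <;>
        exact ⟨p, rfl, by simp [ha]⟩
  | top => rintro b a ha; simp [signedAux, Fml.atoms] at ha
  | bot => rintro b a ha; simp [signedAux, Fml.atoms] at ha
  | neg φ ih =>
      rintro b a ha
      exact ih (!b) ha
  | conj φ ψ ihφ ihψ =>
      rintro b a ha
      rcases ha with ha | ha
      · rcases ihφ b ha with ⟨q, hq, h⟩; exact ⟨q, Or.inl hq, h⟩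
      · rcases ihψ b ha with ⟨q, hq, h⟩; exact ⟨q, Or.inr hq, h⟩
  | disj φ ψ ihφ ihψ =>
      rintro b a ha
      rcases ha with ha | ha
      · rcases ihφ b ha with ⟨q, hq, h⟩; exact ⟨q, Or.inl hq, h⟩
      · rcases ihψ b ha with ⟨q, hq, h⟩; exact ⟨q, Or.inr hq, h⟩
  | impl φ ψ ihφ ihψ =>
      rintro b a ha
      rcases ha with ha | ha
      · rcases ihφ (!b) ha with ⟨q, hq, h⟩; exact ⟨q, Or.inl hq, h⟩
      · rcases ihψ b ha with ⟨q, hq, h⟩; exact ⟨q, Or.inr hq, h⟩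

lemma atoms_emb {α : Type} (φ : Fml α) :
    (emb φ).atoms ⊆ {a | ∃ q, a = XAtom.orig q} := by
  induction φ with
  | atom p => rintro a ha; simp [emb, Fml.map, Fml.atoms] at ha; exact ⟨p, ha⟩
  | top => rintro a ha; simp [emb, Fml.map, Fml.atoms] at ha
  | bot => rintro a ha; simp [emb, Fml.map, Fml.atoms] at ha
  | neg φ ih => exact ih
  | conj φ ψ ihφ ihψ => rintro a (ha | ha); exacts [ihφ ha, ihψ ha]
  | disj φ ψ ihφ ihψ => rintro a (ha | ha); exacts [ihφ ha, ihψ ha]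
  | impl φ ψ ihφ ihψ => rintro a (ha | ha); exacts [ihφ ha, ihψ ha]

/-- For finite `W ⊆ L_Σ`, `C ⊆ D_Σ` and
`C_W = {δ_p ∈ C | p ∈ var(W)}`:
`Cn(W^± ∪ c(C_W)) ∩ L_Σ = Cn(W^± ∪ c(C)) ∩ L_Σ`. -/
theorem restricted_unsigned_consequences {α : Type} (W : Set (Fml α))
    (hW : W.Finite) (C : Set (Dflt (XAtom α))) (hC : C ⊆ DSigma α) :
    {φ : Fml α |
        emb φ ∈ Cn (signedSet W ∪ Dflt.con '' {d ∈ C | ∃ p ∈ vars W, d = deltap p})}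
      = {φ : Fml α | emb φ ∈ Cn (signedSet W ∪ Dflt.con '' C)} := by
  classical
  ext φ
  simp only [Set.mem_setOf_eq]
  constructor
  · -- easy direction: monotonicity
    intro h M hM
    refine h M ?_
    rintro ψ (hψ | ⟨d, ⟨hdC, _⟩, rfl⟩)
    · exact hM ψ (Or.inl hψ)
    · exact hM _ (Or.inr ⟨d, hdC, rfl⟩)
  · -- hard direction
    intro h M hM
    set M' : Set (XAtom α) := {a | match a with
      | .orig p => XAtom.orig p ∈ M
      | .pos p => if p ∈ vars W then XAtom.pos p ∈ M else XAtom.orig p ∈ M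
      | .neg p => if p ∈ vars W then XAtom.neg p ∈ M else XAtom.orig p ∉ M} with hM'
    have hagreeW : ∀ a ∈ {a : XAtom α | ∃ q ∈ vars W, a = .pos q ∨ a = .neg q},
        (a ∈ M ↔ a ∈ M') := by
      rintro a ⟨q, hq, (rfl | rfl)⟩ <;> simp [hM', hq]
    have horig : ∀ q : α, (XAtom.orig q ∈ M ↔ XAtom.orig q ∈ M') := by
      intro q; simp [hM']
    -- M' satisfies the full theory
    have hM'C : ∀ ψ ∈ signedSet W ∪ Dflt.con '' C, ψ.holds M' := by
      rintro ψ (⟨χ, hχW, rfl⟩ | ⟨d, hdC, rfl⟩)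
      · have := hM _ (Or.inl ⟨χ, hχW, rfl⟩)
        refine (holds_congr _ fun a ha => hagreeW a ?_).mp this
        rcases atoms_signedAux χ true ha with ⟨q, hq, hq'⟩
        exact ⟨q, Set.mem_iUnion₂.mpr ⟨χ, hχW, hq⟩, hq'⟩
      · rcases hC hdC with ⟨p, rfl⟩
        by_cases hpW : p ∈ vars W
        · have hmem : (deltap p).con ∈
              Dflt.con '' {d | d ∈ C ∧ ∃ q ∈ vars W, d = deltap q} :=
            ⟨deltap p, ⟨hdC, p, hpW, rfl⟩, rfl⟩
          have := hM _ (Or.inr hmem)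
          refine (holds_congr _ fun a ha => ?_).mp this
          have : a = XAtom.orig p ∨ a = XAtom.pos p ∨ a = XAtom.neg p := by
            simp only [deltap, Fml.iff', Fml.atoms] at ha
            rcases ha with ((h1 | h1) | (h1 | h1)) | ((h1 | h1) | (h1 | h1)) <;>
              · simp only [Set.mem_singleton_iff] at h1; tauto
          rcases this with rfl | rfl | rfl
          · exact horig p
          · exact hagreeW _ ⟨p, hpW, Or.inl rfl⟩
          · exact hagreeW _ ⟨p, hpW, Or.inr rfl⟩
        · show ((deltap p).con).holds M'
          have hpos : XAtom.pos p ∈ M' ↔ XAtom.orig p ∈ M := by simp [hM', hpW]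
          have hneg : XAtom.neg p ∈ M' ↔ XAtom.orig p ∉ M := by simp [hM', hpW]
          have ho : XAtom.orig p ∈ M' ↔ XAtom.orig p ∈ M := (horig p).symm
          simp only [deltap, Fml.iff', Fml.holds]
          show ((XAtom.orig p ∈ M' → XAtom.pos p ∈ M') ∧ _) ∧
            ((¬ XAtom.orig p ∈ M' → XAtom.neg p ∈ M') ∧ _)
          rw [ho, hpos, hneg]
          tauto
    -- conclude
    have := h M' hM'C
    refine (holds_congr _ fun a ha => ?_).mpr this
    rcases atoms_emb φ ha with ⟨q, rfl⟩
    exact horig q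

end Para
end
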